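/- Suppose the behavior policy μ is ε-away from the target policy π, i.e. max_{x} ∑_{a} |π(a|x) − μ(a|x)| ≤ ε. Then for every Q-function Q and λ ∈ [0,1], ‖R^π_λ Q − Q^π‖ ≤ η ‖Q − Q^π‖, where η = γ(1 − λ + λε)/(1 − λγ) and R^π_λ Q := Q + ∑_{t≥0} (λγ)^t (P^μ)^t (T^π Q − Q). -/

import Mathlib

/-!
Write `Δ = Q - Q^π` and `c = λγ`. Since `Q^π` is a fixed point of `T^π`, the increment is
`T^π Q - Q = γ P^π Δ - Δ`, and shifting the index of the `Δ`-part of the series telescopes it: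
`R^π_λ Q - Q^π = ∑ₜ cᵗ (P^μ)ᵗ (γ P^π Δ - c P^μ Δ)`. Splitting
`γ P^π - c P^μ = γ (1 - λ) P^π + c P^{π - μ}`, where `P^π` is a sup-norm contraction and
`P^{π - μ}` has norm at most `ε`, the summand has norm at most `γ (1 - λ + λε) ‖Δ‖`, and the
series in the nonexpansive `P^μ` costs a factor `(1 - c)⁻¹`.
-/

open scoped BigOperators

noncomputable section

/-- The operator `P^π` on Q-functions. -/
def Pop {X A : Type*} [Fintype X] [Fintype A] (P : X → A → X → ℝ) (π : X → A → ℝ)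
    (Q : X × A → ℝ) : X × A → ℝ :=
  fun p => ∑ y : X, ∑ b : A, P p.1 p.2 y * π y b * Q (y, b)

/-- The Bellman operator `T^π Q = r + γ P^π Q`. -/
def Tpol {X A : Type*} [Fintype X] [Fintype A] (P : X → A → X → ℝ) (π : X → A → ℝ)
    (γ : ℝ) (r : X × A → ℝ) (Q : X × A → ℝ) : X × A → ℝ :=
  r + γ • Pop P π Q

/-- The off-policy corrected λ-operator
`R^π_λ Q = Q + ∑_{t≥0} (λγ)^t (P^μ)^t (T^π Q − Q)`. -/
def Rpi {X A : Type*} [Fintype X] [Fintype A] (P : X → A → X → ℝ) (π μ : X → A → ℝ)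
    (γ lam : ℝ) (r : X × A → ℝ) (Q : X × A → ℝ) : X × A → ℝ :=
  Q + ∑' t : ℕ, (lam * γ) ^ t • (Pop P μ)^[t] (Tpol P π γ r Q - Q)

section GeometricIterate

variable {E : Type*} [NormedAddCommGroup E]

lemma norm_iterate_le_of_norm_le {f : E → E} (hf : ∀ v, ‖f v‖ ≤ ‖v‖) (t : ℕ) (v : E) :
    ‖f^[t] v‖ ≤ ‖v‖ := by
  induction t with
  | zero => rfl
  | succ t ih =>
    rw [Function.iterate_succ_apply']
    exact (hf _).trans ih

variable [NormedSpace ℝ E] {c : ℝ}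

lemma norm_pow_smul_iterate_le {f : E → E} (hf : ∀ v, ‖f v‖ ≤ ‖v‖) (hc0 : 0 ≤ c) (v : E)
    (t : ℕ) : ‖c ^ t • f^[t] v‖ ≤ c ^ t * ‖v‖ := by
  rw [norm_smul, Real.norm_of_nonneg (pow_nonneg hc0 t)]
  exact mul_le_mul_of_nonneg_left (norm_iterate_le_of_norm_le hf t v) (pow_nonneg hc0 t)

lemma norm_tsum_pow_smul_iterate_le {f : E → E} (hf : ∀ v, ‖f v‖ ≤ ‖v‖) (hc0 : 0 ≤ c)
    (hc1 : c < 1) (v : E) : ‖∑' t : ℕ, c ^ t • f^[t] v‖ ≤ (1 - c)⁻¹ * ‖v‖ :=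
  tsum_of_norm_bounded ((hasSum_geometric_of_lt_one hc0 hc1).mul_right ‖v‖)
    (norm_pow_smul_iterate_le hf hc0 v)

lemma summable_pow_smul_iterate [CompleteSpace E] {f : E → E} (hf : ∀ v, ‖f v‖ ≤ ‖v‖)
    (hc0 : 0 ≤ c) (hc1 : c < 1) (v : E) : Summable fun t : ℕ => c ^ t • f^[t] v :=
  Summable.of_norm_bounded ((summable_geometric_of_lt_one hc0 hc1).mul_right ‖v‖)
    (norm_pow_smul_iterate_le hf hc0 v)

/-- The `v`-part of the series telescopes: it is `v` followed by the series of `c • L v`. -/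
lemma add_tsum_pow_smul_iterate_sub [CompleteSpace E] (L : E →ₗ[ℝ] E)
    (hL : ∀ v, ‖L v‖ ≤ ‖v‖) (hc0 : 0 ≤ c) (hc1 : c < 1) (v w : E) :
    v + ∑' t : ℕ, c ^ t • L^[t] (w - v) = ∑' t : ℕ, c ^ t • L^[t] (w - c • L v) := by
  have hs := summable_pow_smul_iterate hL hc0 hc1
  have tsum_sub (u u' : E) : ∑' t : ℕ, c ^ t • L^[t] (u - u') =
      ∑' t : ℕ, c ^ t • L^[t] u - ∑' t : ℕ, c ^ t • L^[t] u' := by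
    simp only [iterate_map_sub, smul_sub]
    exact (hs u).tsum_sub (hs u')
  have shift : ∑' t : ℕ, c ^ t • L^[t] v = v + ∑' t : ℕ, c ^ t • L^[t] (c • L v) := by
    rw [(hs v).tsum_eq_zero_add, pow_zero, one_smul, Function.iterate_zero_apply]
    refine congrArg (v + ·) (tsum_congr fun t => ?_)
    rw [Function.iterate_succ_apply, ← Module.End.pow_apply L t (c • L v), map_smul,
      Module.End.pow_apply, smul_smul, pow_succ]
  rw [tsum_sub, tsum_sub, shift]
  abel

end GeometricIterate

section PolicyOperator

variable {X A : Type*} [Fintype X] [Fintype A] {P : X → A → X → ℝ}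

def popLinear (P : X → A → X → ℝ) (π : X → A → ℝ) : (X × A → ℝ) →ₗ[ℝ] (X × A → ℝ) where
  toFun := Pop P π
  map_add' Q R := by
    ext p
    simp only [Pop, Pi.add_apply, mul_add, Finset.sum_add_distrib]
  map_smul' c Q := by
    ext p
    simp only [Pop, Pi.smul_apply, smul_eq_mul, RingHom.id_apply, Finset.mul_sum]
    exact Finset.sum_congr rfl fun y _ => Finset.sum_congr rfl fun b _ => by ring

lemma Pop_sub_Pop (π μ : X → A → ℝ) (Q : X × A → ℝ) :
    Pop P π Q - Pop P μ Q = Pop P (π - μ) Q := by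
  ext p
  simp only [Pop, Pi.sub_apply, ← Finset.sum_sub_distrib, mul_sub, sub_mul]

lemma norm_Pop_le (hP0 : ∀ x a y, 0 ≤ P x a y) (hP1 : ∀ x a, ∑ y : X, P x a y = 1)
    {ν : X → A → ℝ} {C : ℝ} (hν : ∀ x, ∑ a : A, |ν x a| ≤ C) (Q : X × A → ℝ) :
    ‖Pop P ν Q‖ ≤ C * ‖Q‖ := by
  rcases isEmpty_or_nonempty X with hX | ⟨⟨x⟩⟩
  · rw [Subsingleton.elim (Pop P ν Q) 0, Subsingleton.elim Q 0]
    simp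
  have hC : 0 ≤ C := (Finset.sum_nonneg fun a _ => abs_nonneg _).trans (hν x)
  refine (pi_norm_le_iff_of_nonneg (by positivity)).2 fun p => ?_
  rw [Real.norm_eq_abs]
  calc |Pop P ν Q p| ≤ ∑ y : X, ∑ b : A, P p.1 p.2 y * (|ν y b| * ‖Q‖) := by
        refine (Finset.abs_sum_le_sum_abs _ _).trans (Finset.sum_le_sum fun y _ =>
          (Finset.abs_sum_le_sum_abs _ _).trans (Finset.sum_le_sum fun b _ => ?_))
        rw [abs_mul, abs_mul, abs_of_nonneg (hP0 _ _ _), mul_assoc]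
        gcongr
        · exact hP0 _ _ _
        · exact norm_le_pi_norm Q (y, b)
    _ ≤ ∑ y : X, P p.1 p.2 y * (C * ‖Q‖) := by
        gcongr with y
        rw [← Finset.mul_sum, ← Finset.sum_mul]
        gcongr
        · exact hP0 _ _ _
        · exact hν y
    _ = C * ‖Q‖ := by rw [← Finset.sum_mul, hP1, one_mul]

lemma norm_Pop_le_of_stochastic (hP0 : ∀ x a y, 0 ≤ P x a y)
    (hP1 : ∀ x a, ∑ y : X, P x a y = 1) {π : X → A → ℝ} (hπ0 : ∀ x a, 0 ≤ π x a)
    (hπ1 : ∀ x, ∑ a : A, π x a = 1) (Q : X × A → ℝ) : ‖Pop P π Q‖ ≤ ‖Q‖ := by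
  refine (norm_Pop_le hP0 hP1 (C := 1) (fun x => ?_) Q).trans_eq (one_mul _)
  simp only [abs_of_nonneg (hπ0 x _), hπ1 x, le_refl]

lemma Tpol_sub_self {π : X → A → ℝ} {γ : ℝ} {r Qπ : X × A → ℝ}
    (hQπ : Qπ = r + γ • Pop P π Qπ) (Q : X × A → ℝ) :
    Tpol P π γ r Q - Q = γ • Pop P π (Q - Qπ) - (Q - Qπ) := by
  have hr : r = Qπ - γ • Pop P π Qπ := eq_sub_of_add_eq hQπ.symm
  have hsub : Pop P π (Q - Qπ) = Pop P π Q - Pop P π Qπ := map_sub (popLinear P π) Q Qπ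
  rw [Tpol, hr, hsub, smul_sub]
  abel

lemma norm_smul_Pop_sub_smul_Pop_le (hP0 : ∀ x a y, 0 ≤ P x a y)
    (hP1 : ∀ x a, ∑ y : X, P x a y = 1) {π μ : X → A → ℝ} (hπ0 : ∀ x a, 0 ≤ π x a)
    (hπ1 : ∀ x, ∑ a : A, π x a = 1) {ε : ℝ} (hε : ∀ x, ∑ a : A, |π x a - μ x a| ≤ ε)
    {γ lam : ℝ} (hγ0 : 0 ≤ γ) (hl0 : 0 ≤ lam) (hl1 : lam ≤ 1) (Δ : X × A → ℝ) :
    ‖γ • Pop P π Δ - (lam * γ) • Pop P μ Δ‖ ≤ γ * (1 - lam + lam * ε) * ‖Δ‖ := by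
  have hsplit : γ • Pop P π Δ - (lam * γ) • Pop P μ Δ =
      (γ * (1 - lam)) • Pop P π Δ + (lam * γ) • Pop P (π - μ) Δ := by
    rw [← Pop_sub_Pop]
    module
  have hγl : 0 ≤ γ * (1 - lam) := mul_nonneg hγ0 (sub_nonneg.2 hl1)
  calc ‖γ • Pop P π Δ - (lam * γ) • Pop P μ Δ‖
      ≤ γ * (1 - lam) * ‖Δ‖ + lam * γ * (ε * ‖Δ‖) := by
        rw [hsplit]
        refine (norm_add_le _ _).trans (add_le_add ?_ ?_)
        · rw [norm_smul, Real.norm_of_nonneg hγl]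
          exact mul_le_mul_of_nonneg_left (norm_Pop_le_of_stochastic hP0 hP1 hπ0 hπ1 Δ) hγl
        · rw [norm_smul, Real.norm_of_nonneg (by positivity)]
          gcongr
          exact norm_Pop_le hP0 hP1 hε Δ
    _ = γ * (1 - lam + lam * ε) * ‖Δ‖ := by ring

end PolicyOperator

theorem stmt6_general {X A : Type*} [Fintype X] [Fintype A]
    (P : X → A → X → ℝ)
    (hP0 : ∀ x a y, 0 ≤ P x a y) (hP1 : ∀ x a, ∑ y : X, P x a y = 1)
    (π μ : X → A → ℝ)
    (hπ0 : ∀ x a, 0 ≤ π x a) (hπ1 : ∀ x, ∑ a : A, π x a = 1)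
    (hμ0 : ∀ x a, 0 ≤ μ x a) (hμ1 : ∀ x, ∑ a : A, μ x a = 1)
    (ε : ℝ) (hε : ∀ x, ∑ a : A, |π x a - μ x a| ≤ ε)
    (γ : ℝ) (hγ0 : 0 ≤ γ) (hγ1 : γ < 1)
    (lam : ℝ) (hl0 : 0 ≤ lam) (hl1 : lam ≤ 1)
    (r : X × A → ℝ) (Qπ : X × A → ℝ)
    (hQπ : Qπ = r + γ • Pop P π Qπ)
    (Q : X × A → ℝ) :
    ‖Rpi P π μ γ lam r Q - Qπ‖ ≤
      γ * (1 - lam + lam * ε) / (1 - lam * γ) * ‖Q - Qπ‖ := by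
  have hc0 : 0 ≤ lam * γ := mul_nonneg hl0 hγ0
  have hc1 : lam * γ < 1 := (mul_le_of_le_one_left hγ0 hl1).trans_lt hγ1
  have hμ : ∀ v, ‖Pop P μ v‖ ≤ ‖v‖ := norm_Pop_le_of_stochastic hP0 hP1 hμ0 hμ1
  have hR : Rpi P π μ γ lam r Q - Qπ = ∑' t : ℕ, (lam * γ) ^ t •
      (Pop P μ)^[t] (γ • Pop P π (Q - Qπ) - (lam * γ) • Pop P μ (Q - Qπ)) := by
    rw [Rpi, Tpol_sub_self hQπ, add_sub_right_comm]
    exact add_tsum_pow_smul_iterate_sub (popLinear P μ) hμ hc0 hc1 _ _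
  calc ‖Rpi P π μ γ lam r Q - Qπ‖
      ≤ (1 - lam * γ)⁻¹ * ‖γ • Pop P π (Q - Qπ) - (lam * γ) • Pop P μ (Q - Qπ)‖ := by
        rw [hR]
        exact norm_tsum_pow_smul_iterate_le hμ hc0 hc1 _
    _ ≤ (1 - lam * γ)⁻¹ * (γ * (1 - lam + lam * ε) * ‖Q - Qπ‖) := by
        gcongr
        exact norm_smul_Pop_sub_smul_Pop_le hP0 hP1 hπ0 hπ1 hε hγ0 hl0 hl1 _
    _ = γ * (1 - lam + lam * ε) / (1 - lam * γ) * ‖Q - Qπ‖ := by ring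

/-- if μ is ε-away from π, then `R^π_λ` satisfies
`‖R^π_λ Q − Q^π‖ ≤ η ‖Q − Q^π‖` with `η = γ(1 − λ + λε)/(1 − λγ)`. -/
theorem stmt6 {X A : Type*} [Fintype X] [Fintype A] [Nonempty X] [Nonempty A]
    (P : X → A → X → ℝ)
    (hP0 : ∀ x a y, 0 ≤ P x a y) (hP1 : ∀ x a, ∑ y : X, P x a y = 1)
    (π μ : X → A → ℝ)
    (hπ0 : ∀ x a, 0 ≤ π x a) (hπ1 : ∀ x, ∑ a : A, π x a = 1)
    (hμ0 : ∀ x a, 0 ≤ μ x a) (hμ1 : ∀ x, ∑ a : A, μ x a = 1)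
    (ε : ℝ) (hε : ∀ x, ∑ a : A, |π x a - μ x a| ≤ ε)
    (γ : ℝ) (hγ0 : 0 ≤ γ) (hγ1 : γ < 1)
    (lam : ℝ) (hl0 : 0 ≤ lam) (hl1 : lam ≤ 1)
    (r : X × A → ℝ) (Qπ : X × A → ℝ)
    (hQπ : Qπ = r + γ • Pop P π Qπ)
    (Q : X × A → ℝ) :
    ‖Rpi P π μ γ lam r Q - Qπ‖ ≤
      γ * (1 - lam + lam * ε) / (1 - lam * γ) * ‖Q - Qπ‖ :=
  stmt6_general P hP0 hP1 π μ hπ0 hπ1 hμ0 hμ1 ε hε γ hγ0 hγ1 lam hl0 hl1 r Qπ hQπ Q
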